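/- arXiv:1308.4049 — 2 statements merged into one kernel-verified Lean document; each statement's English description precedes it below -/
import Mathlib

section
/- Let (x(t), y(t)) be measurable strategy paths of a continuous-time fictitious play process in a bimatrix game (A,B), with empirical averages p(t) = (1/t)∫_0^t x(s)ds and q(t) = (1/t)∫_0^t y(s)ds, satisfying x(t) ∈ BR_A(q(t)) for all t ≥ 1. Then for all T > 1, ∫_1^T x(t)·A·y(t) dt = T·Ā(q(T)) − Ā(q(1)), where Ā(q) = max_i (Aq)_i. -/
open scoped BigOperators

/-- Maximal entry of the vector `A q`: player A's best payoff against `q`. -/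
noncomputable def Abar {m n : ℕ} (A : Matrix (Fin (m + 1)) (Fin (n + 1)) ℝ)
    (q : Fin (n + 1) → ℝ) : ℝ :=
  Finset.univ.sup' Finset.univ_nonempty (fun i => ∑ j, A i j * q j)

/-! With `Y t = ∫₀ᵗ y`, the hypothesis on `q` says `Y t = t • q t`, so the right-hand side is
`Φ T - Φ 1` for `Φ = Abar A ∘ Y`. Since `Y` is `1`-Lipschitz and `Abar A` is Lipschitz, `Φ` is
absolutely continuous and hence the integral of its a.e. derivative. At almost every `t ≥ 1`
both `Φ` and `Y` are differentiable, and the best-response property says that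
`s ↦ x t ⬝ᵥ A *ᵥ Y s` lies below `Φ` and touches it at `s = t`; so the two derivatives agree
there (envelope argument), giving `Φ' t = x t ⬝ᵥ A *ᵥ y t`. -/

open MeasureTheory Filter Topology Matrix

theorem Finset.lipschitzWith_sup' {ι : Type*} [Fintype ι] (s : Finset ι) (hs : s.Nonempty) :
    LipschitzWith 1 (fun v : ι → ℝ => s.sup' hs v) := by
  refine LipschitzWith.of_le_add_mul 1 fun v w => Finset.sup'_le _ _ fun i hi => ?_
  calc v i ≤ w i + dist (v i) (w i) := by rw [Real.dist_eq]; linarith [le_abs_self (v i - w i)]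
    _ ≤ s.sup' hs w + 1 * dist v w := by
      rw [one_mul]
      exact add_le_add (Finset.le_sup' w hi) (dist_le_pi_dist v w i)

theorem dotProduct_le_sup'_of_mem_stdSimplex {ι : Type*} [Fintype ι] {p : ι → ℝ}
    (hp : p ∈ stdSimplex ℝ ι) (h : (Finset.univ : Finset ι).Nonempty) (v : ι → ℝ) :
    p ⬝ᵥ v ≤ Finset.univ.sup' h v :=
  calc p ⬝ᵥ v ≤ ∑ i, p i * Finset.univ.sup' h v :=
        Finset.sum_le_sum fun i hi => mul_le_mul_of_nonneg_left (Finset.le_sup' v hi) (hp.1 i)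
    _ = Finset.univ.sup' h v := by rw [← Finset.sum_mul, hp.2, one_mul]

theorem sup'_le_dotProduct_of_forall_le {ι : Type*} [Fintype ι] {p v : ι → ℝ}
    (h : (Finset.univ : Finset ι).Nonempty) (hp : ∀ p' ∈ stdSimplex ℝ ι, p' ⬝ᵥ v ≤ p ⬝ᵥ v) :
    Finset.univ.sup' h v ≤ p ⬝ᵥ v := by
  classical
  exact Finset.sup'_le _ _ fun i _ => by
    simpa only [single_one_dotProduct] using hp _ (single_mem_stdSimplex ℝ i)

theorem HasDerivAt.const_dotProduct {ι : Type*} [Fintype ι] {f : ℝ → ι → ℝ} {f' : ι → ℝ}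
    {t : ℝ} (v : ι → ℝ) (hf : HasDerivAt f f' t) :
    HasDerivAt (fun s => v ⬝ᵥ f s) (v ⬝ᵥ f') t := by
  simpa only [dotProduct] using HasDerivAt.fun_sum fun j _ => (hasDerivAt_pi.1 hf j).const_mul (v j)

theorem deriv_eq_of_eventually_le_of_eq {f g : ℝ → ℝ} {g' a : ℝ} (hf : DifferentiableAt ℝ f a)
    (hg : HasDerivAt g g' a) (hle : ∀ᶠ x in 𝓝 a, g x ≤ f x) (heq : f a = g a) :
    deriv f a = g' := by
  have hmin : IsLocalMin (fun x => f x - g x) a :=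
    hle.mono fun x hx => by simpa [heq] using hx
  linarith [hmin.hasDerivAt_eq_zero (hf.hasDerivAt.sub hg)]

theorem lipschitzWith_intervalIntegral_of_norm_le {E : Type*} [NormedAddCommGroup E]
    [NormedSpace ℝ E] {f : ℝ → E} {C : NNReal} (hf : LocallyIntegrable f volume)
    (hC : ∀ x, ‖f x‖ ≤ C) (c : ℝ) :
    LipschitzWith C (fun t => ∫ s in c..t, f s) := by
  refine LipschitzWith.of_dist_le_mul fun t t' => ?_
  have hint (a b : ℝ) : IntervalIntegrable f volume a b :=
    (hf.integrableOn_isCompact isCompact_uIcc).intervalIntegrable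
  rw [dist_eq_norm, intervalIntegral.integral_interval_sub_left (hint c t) (hint c t'),
    Real.dist_eq]
  exact intervalIntegral.norm_integral_le_of_norm_le_const fun x _ => hC x

theorem sum_sum_mul_mul_eq_dotProduct_mulVec {ι κ : Type*} [Fintype ι] [Fintype κ]
    (p : ι → ℝ) (A : Matrix ι κ ℝ) (q : κ → ℝ) :
    ∑ i, ∑ j, p i * A i j * q j = p ⬝ᵥ (A *ᵥ q) := by
  simp only [dotProduct, mulVec, Finset.mul_sum, mul_assoc]

section Abar

variable {m n : ℕ} (A : Matrix (Fin (m + 1)) (Fin (n + 1)) ℝ)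

theorem Abar_eq_sup'_mulVec (q : Fin (n + 1) → ℝ) :
    Abar A q = Finset.univ.sup' Finset.univ_nonempty (A *ᵥ q) :=
  rfl

theorem lipschitzWith_Abar : ∃ K, LipschitzWith K (Abar A) :=
  ⟨_, (Finset.lipschitzWith_sup' _ _).comp
    (LinearMap.toContinuousLinearMap (Matrix.mulVecLin A)).lipschitz⟩

theorem Abar_smul {c : ℝ} (hc : 0 ≤ c) (q : Fin (n + 1) → ℝ) :
    Abar A (c • q) = c * Abar A q := by
  simp only [Abar_eq_sup'_mulVec, mulVec_smul, Finset.mul₀_sup' hc]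
  rfl

theorem dotProduct_mulVec_le_Abar {p : Fin (m + 1) → ℝ} (hp : p ∈ stdSimplex ℝ (Fin (m + 1)))
    (q : Fin (n + 1) → ℝ) : p ⬝ᵥ (A *ᵥ q) ≤ Abar A q :=
  dotProduct_le_sup'_of_mem_stdSimplex hp _ _

theorem Abar_eq_of_forall_dotProduct_mulVec_le {p : Fin (m + 1) → ℝ}
    (hp : p ∈ stdSimplex ℝ (Fin (m + 1))) {q : Fin (n + 1) → ℝ}
    (hbr : ∀ p' ∈ stdSimplex ℝ (Fin (m + 1)), p' ⬝ᵥ (A *ᵥ q) ≤ p ⬝ᵥ (A *ᵥ q)) :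
    Abar A q = p ⬝ᵥ (A *ᵥ q) :=
  le_antisymm (sup'_le_dotProduct_of_forall_le _ hbr) (dotProduct_mulVec_le_Abar A hp q)

theorem integral_dotProduct_mulVec_eq_Abar_sub {Y y : ℝ → Fin (n + 1) → ℝ}
    {x : ℝ → Fin (m + 1) → ℝ} {K : NNReal} {a b : ℝ} (hY : LipschitzWith K Y)
    (hYy : ∀ᵐ t, HasDerivAt Y (y t) t) (hx : ∀ t, x t ∈ stdSimplex ℝ (Fin (m + 1)))
    (hbr : ∀ t ∈ Set.uIcc a b, Abar A (Y t) = x t ⬝ᵥ (A *ᵥ Y t)) :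
    ∫ t in a..b, x t ⬝ᵥ (A *ᵥ y t) = Abar A (Y b) - Abar A (Y a) := by
  obtain ⟨K', hA⟩ := lipschitzWith_Abar A
  have hΦ : AbsolutelyContinuousOnInterval (fun t => Abar A (Y t)) a b :=
    (hA.comp hY).lipschitzOnWith.absolutelyContinuousOnInterval
  rw [← hΦ.integral_deriv_eq_sub]
  refine intervalIntegral.integral_congr_ae ?_
  filter_upwards [hΦ.ae_differentiableAt, hYy] with t hΦt hYt ht
  have ht' : t ∈ Set.uIcc a b := Set.uIoc_subset_uIcc ht
  refine (deriv_eq_of_eventually_le_of_eq (hΦt ht') ?_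
    (Eventually.of_forall fun s => dotProduct_mulVec_le_Abar A (hx t) (Y s)) (hbr t ht')).symm
  simpa only [dotProduct_mulVec] using hYt.const_dotProduct (x t ᵥ* A)

end Abar

theorem fp_integral_identity_general {m n : ℕ}
    (A : Matrix (Fin (m + 1)) (Fin (n + 1)) ℝ)
    (x : ℝ → Fin (m + 1) → ℝ) (y : ℝ → Fin (n + 1) → ℝ)
    (hymeas : Measurable y)
    (hx : ∀ t, x t ∈ stdSimplex ℝ (Fin (m + 1)))
    (hy : ∀ t, y t ∈ stdSimplex ℝ (Fin (n + 1)))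
    (q : ℝ → Fin (n + 1) → ℝ)
    (hq : ∀ t > (0:ℝ), q t = (1 / t) • ∫ s in (0:ℝ)..t, y s)
    -- fictitious play: `x(t)` is a best response to the empirical average `q(t)` for `t ≥ 1`
    (hBR : ∀ t ≥ (1:ℝ), ∀ p' ∈ stdSimplex ℝ (Fin (m + 1)),
      ∑ i, ∑ j, p' i * A i j * q t j ≤ ∑ i, ∑ j, x t i * A i j * q t j) :
    ∀ T > (1:ℝ),
      (∫ t in (1:ℝ)..T, ∑ i, ∑ j, x t i * A i j * y t j)
        = T * Abar A (q T) - Abar A (q 1) := by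
  intro T hT
  have hy_norm (t : ℝ) : ‖y t‖ ≤ (1 : NNReal) := by
    simpa using stdSimplex_subset_closedBall (hy t)
  have hy_int : LocallyIntegrable y volume :=
    (locallyIntegrable_const (1 : ℝ)).mono hymeas.aestronglyMeasurable
      (ae_of_all _ fun t => by simpa using hy_norm t)
  have hYq : ∀ t > (0:ℝ), ∫ s in (0:ℝ)..t, y s = t • q t := fun t ht => by
    rw [hq t ht, smul_smul, mul_one_div_cancel ht.ne', one_smul]
  simp only [sum_sum_mul_mul_eq_dotProduct_mulVec] at hBR ⊢
  rw [integral_dotProduct_mulVec_eq_Abar_sub A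
    (lipschitzWith_intervalIntegral_of_norm_le hy_int hy_norm 0)
    ((LocallyIntegrable.ae_hasDerivAt_integral hy_int).mono fun t h => h 0) hx fun t ht => ?_]
  · rw [hYq T (by linarith), hYq 1 one_pos, Abar_smul A (by linarith), Abar_smul A zero_le_one,
      one_mul]
  · have ht1 : 1 ≤ t := (Set.uIcc_of_le hT.le ▸ ht).1
    rw [hYq t (by linarith), Abar_smul A (by linarith), mulVec_smul, dotProduct_smul, smul_eq_mul,
      Abar_eq_of_forall_dotProduct_mulVec_le A (hx t) (hBR t ht1)]

/-- along a continuous-time fictitious play path,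
`∫_1^T x(t)·A·y(t) dt = T·Ā(q(T)) − Ā(q(1))`. -/
theorem fp_integral_identity {m n : ℕ}
    (A : Matrix (Fin (m + 1)) (Fin (n + 1)) ℝ)
    (x : ℝ → Fin (m + 1) → ℝ) (y : ℝ → Fin (n + 1) → ℝ)
    (hxmeas : Measurable x) (hymeas : Measurable y)
    (hx : ∀ t, x t ∈ stdSimplex ℝ (Fin (m + 1)))
    (hy : ∀ t, y t ∈ stdSimplex ℝ (Fin (n + 1)))
    (q : ℝ → Fin (n + 1) → ℝ)
    (hq : ∀ t > (0:ℝ), q t = (1 / t) • ∫ s in (0:ℝ)..t, y s)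
    -- fictitious play: `x(t)` is a best response to the empirical average `q(t)` for `t ≥ 1`
    (hBR : ∀ t ≥ (1:ℝ), ∀ p' ∈ stdSimplex ℝ (Fin (m + 1)),
      ∑ i, ∑ j, p' i * A i j * q t j ≤ ∑ i, ∑ j, x t i * A i j * q t j) :
    ∀ T > (1:ℝ),
      (∫ t in (1:ℝ)..T, ∑ i, ∑ j, x t i * A i j * y t j)
        = T * Abar A (q T) - Abar A (q 1) :=
  fp_integral_identity_general A x y hymeas hx hy q hq hBR
end

section
/- The point ((1/3,1/3,1/3),(1/3,1/3,1/3)) is the unique Nash equilibrium of the bimatrix game (A_β,B_β) with A_β = [[1,0,β],[β,1,0],[0,β,1]] and B_β = [[-β,1,0],[0,-β,1],[1,0,-β]], for every β ∈ (0,1). -/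
/-- Expected payoff `p A q`. -/
def pay (A : Matrix (Fin 3) (Fin 3) ℝ) (p q : Fin 3 → ℝ) : ℝ :=
  ∑ i, ∑ j, p i * A i j * q j

/-- `(p,q)` is a Nash equilibrium of the 3×3 bimatrix game `(A,B)`. -/
def IsNash (A B : Matrix (Fin 3) (Fin 3) ℝ) (p q : Fin 3 → ℝ) : Prop :=
  p ∈ stdSimplex ℝ (Fin 3) ∧ q ∈ stdSimplex ℝ (Fin 3) ∧
  (∀ p' ∈ stdSimplex ℝ (Fin 3), pay A p' q ≤ pay A p q) ∧
  (∀ q' ∈ stdSimplex ℝ (Fin 3), pay B p q' ≤ pay B p q)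

/-!
Both games are circulant: against `q` row `i` earns `q i + β q (i - 1)`, and against `p`
column `j` earns `p (j - 1) - β p j`. These column payoffs sum to `1 - β > 0`, so the column
player's equilibrium payoff is positive. Hence if row `i - 1` is unused, column `i` earns at most
`0` and is unused; and if column `i` is unused, row `i` earns strictly less than row `i - 1` and is
unused. Going round the cycle, an unused row would make every row unused, so both equilibrium
strategies have full support and each player is indifferent among their pure strategies. Then the
successive differences of `q` get multiplied by `-β` at each step forward round the cycle, and
those of `p` by `β` at each step backward; since `(-β) ^ 3 ≠ 1 ≠ β ^ 3` they vanish.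
-/

open Matrix

theorem eq_zero_of_le_dotProduct_of_lt {ι : Type*} [Fintype ι] {p u : ι → ℝ}
    (hp : p ∈ stdSimplex ℝ ι) (hu : ∀ j, u j ≤ p ⬝ᵥ u) {i : ι} (hi : u i < p ⬝ᵥ u) :
    p i = 0 := by
  have hsum : ∑ j, p j * (p ⬝ᵥ u - u j) = 0 := by
    simp only [mul_sub, Finset.sum_sub_distrib, ← Finset.sum_mul, hp.2, one_mul, dotProduct,
      sub_self]
  have hterm := (Finset.sum_eq_zero_iff_of_nonneg fun j _ =>
    mul_nonneg (hp.1 j) (sub_nonneg.2 (hu j))).1 hsum i (Finset.mem_univ i)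
  exact (mul_eq_zero.1 hterm).resolve_right (sub_pos.2 hi).ne'

theorem eq_zero_of_forall_add_eq_mul {G R : Type*} [AddCommGroup G] [CommRing R] [IsDomain R]
    {f : G → R} {k : G} {c : R} {n : ℕ} (hk : n • k = 0) (hc : c ^ n ≠ 1)
    (h : ∀ i, f (i + k) = c * f i) : f = 0 := by
  have hiter : ∀ i (m : ℕ), f (i + m • k) = c ^ m * f i := by
    intro i m
    induction m with
    | zero => simp
    | succ m ih => rw [succ_nsmul, ← add_assoc, h, ih, pow_succ']; ring
  funext i
  have hfix := hiter i n
  rw [hk, add_zero] at hfix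
  have hmul : (1 - c ^ n) * f i = 0 := by linear_combination hfix
  exact (mul_eq_zero.1 hmul).resolve_left (sub_ne_zero.2 hc.symm)

theorem Fin.sum_univ_three_sub_add {M : Type*} [AddCommMonoid M] (f : Fin 3 → M) (i : Fin 3) :
    ∑ j, f j = f (i - 1) + f i + f (i + 1) := by
  fin_cases i <;> simp [Fin.sum_univ_three] <;> abel

theorem eq_one_third_of_mem_stdSimplex {p : Fin 3 → ℝ} (hp : p ∈ stdSimplex ℝ (Fin 3))
    (h : ∀ i, p i = p (i - 1)) : p = fun _ => 1 / 3 := by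
  funext i
  have hs := Fin.sum_univ_three_sub_add p i
  rw [hp.2, ← h i, h (i + 1), add_sub_cancel_right] at hs
  linarith

theorem pay_eq_dotProduct_mulVec (A : Matrix (Fin 3) (Fin 3) ℝ) (p q : Fin 3 → ℝ) :
    pay A p q = p ⬝ᵥ (A *ᵥ q) := by
  simp only [pay, dotProduct, mulVec, Finset.mul_sum, mul_assoc]

theorem pay_eq_dotProduct_vecMul (A : Matrix (Fin 3) (Fin 3) ℝ) (p q : Fin 3 → ℝ) :
    pay A p q = q ⬝ᵥ (p ᵥ* A) := by
  rw [pay_eq_dotProduct_mulVec, dotProduct_mulVec, dotProduct_comm]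

theorem isNash_of_equalizing {A B : Matrix (Fin 3) (Fin 3) ℝ} {p q : Fin 3 → ℝ}
    (hp : p ∈ stdSimplex ℝ (Fin 3)) (hq : q ∈ stdSimplex ℝ (Fin 3)) {a b : ℝ}
    (hA : ∀ i, (A *ᵥ q) i = a) (hB : ∀ j, (p ᵥ* B) j = b) : IsNash A B p q := by
  have hrow : ∀ p' ∈ stdSimplex ℝ (Fin 3), p' ⬝ᵥ (A *ᵥ q) = a := fun p' hp' => by
    simp only [dotProduct, hA, ← Finset.sum_mul, hp'.2, one_mul]
  have hcol : ∀ q' ∈ stdSimplex ℝ (Fin 3), q' ⬝ᵥ (p ᵥ* B) = b := fun q' hq' => by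
    simp only [dotProduct, hB, ← Finset.sum_mul, hq'.2, one_mul]
  refine ⟨hp, hq, fun p' hp' => ?_, fun q' hq' => ?_⟩
  · rw [pay_eq_dotProduct_mulVec, pay_eq_dotProduct_mulVec, hrow p' hp', hrow p hp]
  · rw [pay_eq_dotProduct_vecMul, pay_eq_dotProduct_vecMul, hcol q' hq', hcol q hq]

namespace IsNash

variable {A B : Matrix (Fin 3) (Fin 3) ℝ} {p q : Fin 3 → ℝ}

theorem mulVec_le (h : IsNash A B p q) (i : Fin 3) : (A *ᵥ q) i ≤ p ⬝ᵥ (A *ᵥ q) := by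
  simpa only [pay_eq_dotProduct_mulVec, single_one_dotProduct] using
    h.2.2.1 _ (single_mem_stdSimplex ℝ i)

theorem vecMul_le (h : IsNash A B p q) (j : Fin 3) : (p ᵥ* B) j ≤ q ⬝ᵥ (p ᵥ* B) := by
  simpa only [pay_eq_dotProduct_vecMul, single_one_dotProduct] using
    h.2.2.2 _ (single_mem_stdSimplex ℝ j)

theorem mulVec_eq_of_ne_zero (h : IsNash A B p q) {i : Fin 3} (hi : p i ≠ 0) :
    (A *ᵥ q) i = p ⬝ᵥ (A *ᵥ q) :=
  (h.mulVec_le i).eq_of_not_lt (mt (eq_zero_of_le_dotProduct_of_lt h.1 h.mulVec_le) hi)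

theorem vecMul_eq_of_ne_zero (h : IsNash A B p q) {j : Fin 3} (hj : q j ≠ 0) :
    (p ᵥ* B) j = q ⬝ᵥ (p ᵥ* B) :=
  (h.vecMul_le j).eq_of_not_lt (mt (eq_zero_of_le_dotProduct_of_lt h.2.1 h.vecMul_le) hj)

end IsNash

def shapleyA (β : ℝ) : Matrix (Fin 3) (Fin 3) ℝ :=
  Matrix.of ![![1, 0, β], ![β, 1, 0], ![0, β, 1]]

def shapleyB (β : ℝ) : Matrix (Fin 3) (Fin 3) ℝ :=
  Matrix.of ![![-β, 1, 0], ![0, -β, 1], ![1, 0, -β]]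

theorem shapleyA_mulVec (β : ℝ) (q : Fin 3 → ℝ) (i : Fin 3) :
    (shapleyA β *ᵥ q) i = q i + β * q (i - 1) := by
  fin_cases i <;>
    simp [shapleyA, mulVec, dotProduct, Fin.sum_univ_three, show (-1 : Fin 3) = 2 from rfl] <;>
    ring

theorem vecMul_shapleyB (β : ℝ) (p : Fin 3 → ℝ) (j : Fin 3) :
    (p ᵥ* shapleyB β) j = p (j - 1) - β * p j := by
  fin_cases j <;>
    simp [shapleyB, vecMul, dotProduct, Fin.sum_univ_three, show (-1 : Fin 3) = 2 from rfl] <;>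
    ring

theorem isNash_shapley_one_third (β : ℝ) :
    IsNash (shapleyA β) (shapleyB β) (fun _ => 1 / 3) (fun _ => 1 / 3) := by
  have hmem : (fun _ : Fin 3 => (1 : ℝ) / 3) ∈ stdSimplex ℝ (Fin 3) :=
    ⟨fun _ => by norm_num, by norm_num [Fin.sum_univ_three]⟩
  exact isNash_of_equalizing hmem hmem (a := (1 + β) / 3) (b := (1 - β) / 3)
    (fun i => by rw [shapleyA_mulVec]; ring) (fun j => by rw [vecMul_shapleyB]; ring)

section Shapley

variable {β : ℝ} {p q : Fin 3 → ℝ}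

theorem IsNash.shapley_value_pos (h : IsNash (shapleyA β) (shapleyB β) p q) (hβ1 : β < 1) :
    0 < q ⬝ᵥ (p ᵥ* shapleyB β) := by
  have hsum : ∑ j, (p ᵥ* shapleyB β) j = 1 - β := by
    have hshift : ∑ j, p (j - 1) = ∑ j, p j := (Equiv.subRight 1).sum_comp p
    simp only [vecMul_shapleyB, Finset.sum_sub_distrib, ← Finset.mul_sum, hshift, h.1.2, mul_one]
  have hle := Finset.sum_le_sum fun j (_ : j ∈ Finset.univ) => h.vecMul_le j
  simp only [Finset.sum_const, Finset.card_univ, Fintype.card_fin, nsmul_eq_mul,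
    Nat.cast_ofNat] at hle
  linarith

theorem IsNash.shapley_eq_zero_of_eq_zero_sub_one (h : IsNash (shapleyA β) (shapleyB β) p q)
    (hβ0 : 0 ≤ β) (hβ1 : β < 1) {i : Fin 3} (hi : p (i - 1) = 0) : q i = 0 := by
  refine eq_zero_of_le_dotProduct_of_lt h.2.1 h.vecMul_le ?_
  rw [vecMul_shapleyB, hi]
  nlinarith [mul_nonneg hβ0 (h.1.1 i), h.shapley_value_pos hβ1]

theorem IsNash.shapley_eq_zero_of_eq_zero (h : IsNash (shapleyA β) (shapleyB β) p q)
    (hβ0 : 0 < β) (hβ1 : β < 1) {i : Fin 3} (hi : q i = 0) : p i = 0 := by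
  refine eq_zero_of_le_dotProduct_of_lt h.1 h.mulVec_le (lt_of_lt_of_le ?_ (h.mulVec_le (i - 1)))
  have hs := Fin.sum_univ_three_sub_add q i
  rw [h.2.1.2, hi] at hs
  rw [shapleyA_mulVec, shapleyA_mulVec, hi, (by decide : ∀ j : Fin 3, j - 1 - 1 = j + 1) i]
  nlinarith [mul_nonneg (sq_nonneg (1 - β)) (h.2.1.1 (i - 1)),
    mul_nonneg (sq_nonneg β) (h.2.1.1 (i + 1)), mul_pos hβ0 (sub_pos.2 hβ1)]

theorem IsNash.shapley_ne_zero (h : IsNash (shapleyA β) (shapleyB β) p q)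
    (hβ0 : 0 < β) (hβ1 : β < 1) (i : Fin 3) : p i ≠ 0 := by
  have step : ∀ j, p j = 0 → p (j + 1) = 0 := fun j hj =>
    h.shapley_eq_zero_of_eq_zero hβ0 hβ1 <|
      h.shapley_eq_zero_of_eq_zero_sub_one hβ0.le hβ1 (by rwa [add_sub_cancel_right])
  intro hi
  have hs := Fin.sum_univ_three_sub_add p i
  rw [h.1.2, (by decide : ∀ j : Fin 3, j - 1 = j + 1 + 1) i, step _ (step i hi), hi,
    step i hi] at hs
  norm_num at hs

theorem eq_one_third_of_shapleyA_mulVec_eq (hβ0 : 0 < β) (hq : q ∈ stdSimplex ℝ (Fin 3))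
    {a : ℝ} (hu : ∀ i, (shapleyA β *ᵥ q) i = a) : q = fun _ => 1 / 3 := by
  have hc : (-β) ^ 3 ≠ 1 := by
    rw [Odd.neg_pow (by decide)]
    linarith [pow_pos hβ0 3]
  have hd := eq_zero_of_forall_add_eq_mul (f := fun i => q i - q (i - 1)) (k := 1)
    (by decide : 3 • (1 : Fin 3) = 0) hc fun i => by
      have hi := (hu (i + 1)).trans (hu i).symm
      rw [shapleyA_mulVec, shapleyA_mulVec, add_sub_cancel_right] at hi
      simp only [add_sub_cancel_right]
      linear_combination hi
  exact eq_one_third_of_mem_stdSimplex hq fun i => sub_eq_zero.1 (congrFun hd i)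

theorem eq_one_third_of_vecMul_shapleyB_eq (hβ0 : 0 < β) (hβ1 : β < 1)
    (hp : p ∈ stdSimplex ℝ (Fin 3)) {b : ℝ} (hv : ∀ j, (p ᵥ* shapleyB β) j = b) :
    p = fun _ => 1 / 3 := by
  have hc : β ^ 3 ≠ 1 := (pow_lt_one₀ hβ0.le hβ1 (by norm_num)).ne
  have hd := eq_zero_of_forall_add_eq_mul (f := fun j => p j - p (j - 1)) (k := -1)
    (by decide : 3 • (-1 : Fin 3) = 0) hc fun j => by
      have hj := (hv (j - 1)).trans (hv j).symm
      rw [vecMul_shapleyB, vecMul_shapleyB] at hj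
      simp only [← sub_eq_add_neg]
      linear_combination -hj
  exact eq_one_third_of_mem_stdSimplex hp fun j => sub_eq_zero.1 (congrFun hd j)

end Shapley

/-- `((1/3,1/3,1/3),(1/3,1/3,1/3))` is the unique Nash equilibrium of
`(A_β, B_β)` for every `β ∈ (0,1)`. -/
theorem shapley_family_unique_nash (β : ℝ) (hβ : β ∈ Set.Ioo (0:ℝ) 1) :
    IsNash (Matrix.of ![![1, 0, β], ![β, 1, 0], ![0, β, 1]])
           (Matrix.of ![![-β, 1, 0], ![0, -β, 1], ![1, 0, -β]])
           (fun _ => 1 / 3) (fun _ => 1 / 3) ∧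
    ∀ p q, IsNash (Matrix.of ![![1, 0, β], ![β, 1, 0], ![0, β, 1]])
                  (Matrix.of ![![-β, 1, 0], ![0, -β, 1], ![1, 0, -β]]) p q →
      p = (fun _ => 1 / 3) ∧ q = (fun _ => 1 / 3) := by
  obtain ⟨hβ0, hβ1⟩ := hβ
  refine ⟨isNash_shapley_one_third β, fun p q h => ?_⟩
  have hp : ∀ i, p i ≠ 0 := h.shapley_ne_zero hβ0 hβ1
  have hq : ∀ j, q j ≠ 0 := fun j hj => hp j (h.shapley_eq_zero_of_eq_zero hβ0 hβ1 hj)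
  exact ⟨eq_one_third_of_vecMul_shapleyB_eq hβ0 hβ1 h.1 fun j => h.vecMul_eq_of_ne_zero (hq j),
    eq_one_third_of_shapleyA_mulVec_eq hβ0 h.2.1 fun i => h.mulVec_eq_of_ne_zero (hp i)⟩
end
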